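/- Let O and N be points in the Euclidean plane and R > 0 with dist(O,N) = R/2. Then there exist infinitely many nondegenerate triangles ABC with circumcenter O, circumradius R, and nine-point center N (i.e., with dist(O,A) = dist(O,B) = dist(O,C) = R and midpoint(O, orthocenter(ABC)) = N); moreover every such triangle is right-angled, and its right-angle vertex is the internal tangency point T = O + 2·(N − O) of the circumcircle and the Euler circle. -/

import Mathlib

/-! Write `a, b, c` for the vertices relative to the circumcenter `O`. The orthocenter is
`O + a + b + c`, so the nine-point center is `N` exactly when `a + b + c = 2 • (N - O) = T - O`.
If `‖a‖ = ‖b‖ = ‖c‖ = ‖a + b + c‖`, expanding the norms shows that `b + c`, `c + a`, `a + b` are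
pairwise orthogonal, so in the plane one of them vanishes: two vertices are antipodal, Thales makes
the angle at the third one right, and that vertex is `O + (a + b + c) = T`. Conversely `T` together
with any antipodal pair `B`, `2 • O - B` other than `T` and its antipode is such a triangle, and the
circle carries infinitely many such pairs. -/

open EuclideanGeometry Real

open Module
open scoped RealInnerProductSpace

variable {V : Type*} [NormedAddCommGroup V] [InnerProductSpace ℝ V]

theorem inner_add_add_eq_zero_of_norm_eq {a b c : V} {r : ℝ} (ha : ‖a‖ = r) (hb : ‖b‖ = r)
    (hc : ‖c‖ = r) (habc : ‖a + b + c‖ = r) :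
    ⟪b + c, c + a⟫ = 0 ∧ ⟪b + c, a + b⟫ = 0 ∧ ⟪c + a, a + b⟫ = 0 := by
  have hsq : ‖a + b + c‖ ^ 2 = ‖a‖ ^ 2 + ‖b‖ ^ 2 + ‖c‖ ^ 2 + 2 * (⟪a, b⟫ + ⟪b, c⟫ + ⟪c, a⟫) := by
    simp only [← real_inner_self_eq_norm_sq, inner_add_left, inner_add_right,
      real_inner_comm a b, real_inner_comm b c, real_inner_comm c a]
    ring
  rw [ha, hb, hc, habc] at hsq
  refine ⟨?_, ?_, ?_⟩ <;>
  · simp only [inner_add_left, inner_add_right, real_inner_self_eq_norm_sq, ha, hb, hc]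
    linarith [real_inner_comm a b, real_inner_comm b c, real_inner_comm c a]

theorem eq_zero_or_eq_zero_or_eq_zero_of_inner_eq_zero [FiniteDimensional ℝ V]
    (hV : finrank ℝ V ≤ 2) {x y z : V} (hxy : ⟪x, y⟫ = 0) (hxz : ⟪x, z⟫ = 0)
    (hyz : ⟪y, z⟫ = 0) : x = 0 ∨ y = 0 ∨ z = 0 := by
  by_contra! hne
  have hli : LinearIndependent ℝ ![x, y, z] := by
    refine linearIndependent_of_ne_zero_of_inner_eq_zero (fun i => ?_) fun i j hij => ?_
    · fin_cases i <;> simp [hne.1, hne.2.1, hne.2.2]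
    · fin_cases i <;> fin_cases j <;> simp_all [real_inner_comm]
  have := hli.fintype_card_le_finrank
  simp only [Fintype.card_fin] at this
  omega

theorem midpoint_self_add_eq_iff {x v y : V} :
    midpoint ℝ x (x + v) = y ↔ v = (2 : ℝ) • (y - x) := by
  rw [midpoint_eq_iff, AffineEquiv.pointReflection_apply, vsub_eq_sub, vadd_eq_add]
  constructor <;> intro h <;> linear_combination (norm := module) -h

theorem Affine.Simplex.eq_circumcenter_of_dist_eq_of_finrank_eq {P : Type*} [MetricSpace P]
    [NormedAddTorsor V P] [FiniteDimensional ℝ V] {n : ℕ}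
    (hV : finrank ℝ V = n) (s : Affine.Simplex ℝ P n) {p : P} {r : ℝ}
    (hr : ∀ i, dist (s.points i) p = r) : p = s.circumcenter := by
  have hspan : affineSpan ℝ (Set.range s.points) = ⊤ :=
    s.independent.affineSpan_eq_top_iff_card_eq_finrank_add_one.2 (by simp [hV])
  exact s.eq_circumcenter_of_dist_eq (hspan ▸ AffineSubspace.mem_top ℝ V p) hr

theorem Affine.Triangle.orthocenter_eq_sum_vsub_vadd_circumcenter {P : Type*} [MetricSpace P]
    [NormedAddTorsor V P] (t : Affine.Triangle ℝ P) :
    t.orthocenter = (∑ i, (t.points i -ᵥ t.circumcenter)) +ᵥ t.circumcenter := by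
  rw [t.orthocenter_eq_smul_vsub_vadd_circumcenter, Finset.centroid_def,
    Finset.affineCombination_eq_weightedVSubOfPoint_vadd_of_sum_eq_one _ _ _
      (Finset.sum_centroidWeights_eq_one_of_card_ne_zero _ _ (by simp)) t.circumcenter,
    vadd_vsub, Finset.weightedVSubOfPoint_apply, Finset.smul_sum]
  congr 1
  refine Finset.sum_congr rfl fun i _ => ?_
  simp [smul_smul]

theorem angle_eq_pi_div_two_of_sub_add_sub_eq_zero {O A B C : V} {r : ℝ} (hA : dist O A = r)
    (hB : dist O B = r) (hBC : (B - O) + (C - O) = 0) : ∠ B A C = π / 2 := by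
  have hdiam : (⟨O, r⟩ : Sphere V).IsDiameter B C := by
    refine ⟨by rw [mem_sphere, dist_comm, hB], ?_⟩
    rw [midpoint_eq_iff, AffineEquiv.pointReflection_apply, vsub_eq_sub, vadd_eq_add]
    linear_combination (norm := module) -hBC
  rw [Sphere.thales_theorem hdiam, mem_sphere, dist_comm, hA]

theorem norm_two_smul_sub_eq_of_dist_eq_half {O N : V} {R : ℝ} (hd : dist O N = R / 2) :
    ‖(2 : ℝ) • (N - O)‖ = R := by
  rw [norm_smul, ← dist_eq_norm, dist_comm, hd, Real.norm_two]
  ring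

def circumNinePointTriangles (O N : V) (R : ℝ) : Set (Set V) :=
  {s | ∃ (A B C : V) (h : AffineIndependent ℝ ![A, B, C]),
    s = {A, B, C} ∧ dist O A = R ∧ dist O B = R ∧ dist O C = R ∧
      midpoint ℝ O (Affine.Triangle.orthocenter ⟨![A, B, C], h⟩) = N}

section Plane

variable [Fact (finrank ℝ V = 2)]

attribute [local instance] FiniteDimensional.of_fact_finrank_eq_two

theorem orthocenter_eq_of_dist_eq {O A B C : V} {r : ℝ} (h : AffineIndependent ℝ ![A, B, C])
    (hA : dist O A = r) (hB : dist O B = r) (hC : dist O C = r) :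
    Affine.Triangle.orthocenter ⟨![A, B, C], h⟩ = O + ((A - O) + (B - O) + (C - O)) := by
  set t : Affine.Triangle ℝ V := ⟨![A, B, C], h⟩
  have hO : O = t.circumcenter := by
    refine t.eq_circumcenter_of_dist_eq_of_finrank_eq Fact.out (r := r) fun i => ?_
    fin_cases i <;> simp [t, dist_comm, hA, hB, hC]
  rw [t.orthocenter_eq_sum_vsub_vadd_circumcenter, ← hO, Fin.sum_univ_three, vadd_eq_add, add_comm]
  simp [t]

theorem midpoint_orthocenter_eq_iff {O N A B C : V} {r : ℝ} (h : AffineIndependent ℝ ![A, B, C])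
    (hA : dist O A = r) (hB : dist O B = r) (hC : dist O C = r) :
    midpoint ℝ O (Affine.Triangle.orthocenter ⟨![A, B, C], h⟩) = N ↔
      (A - O) + (B - O) + (C - O) = (2 : ℝ) • (N - O) := by
  rw [orthocenter_eq_of_dist_eq h hA hB hC, midpoint_self_add_eq_iff]

theorem right_angle_of_sub_add_sub_add_sub_eq {O A B C d : V} {r : ℝ} (hA : dist O A = r)
    (hB : dist O B = r) (hC : dist O C = r) (hd : ‖d‖ = r)
    (hsum : (A - O) + (B - O) + (C - O) = d) :
    (∠ B A C = π / 2 ∧ A = O + d) ∨ (∠ A B C = π / 2 ∧ B = O + d) ∨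
      (∠ B C A = π / 2 ∧ C = O + d) := by
  have ha : ‖A - O‖ = r := by rw [← dist_eq_norm, dist_comm, hA]
  have hb : ‖B - O‖ = r := by rw [← dist_eq_norm, dist_comm, hB]
  have hc : ‖C - O‖ = r := by rw [← dist_eq_norm, dist_comm, hC]
  obtain ⟨hxy, hxz, hyz⟩ := inner_add_add_eq_zero_of_norm_eq ha hb hc (hsum ▸ hd)
  rcases eq_zero_or_eq_zero_or_eq_zero_of_inner_eq_zero (Fact.out : finrank ℝ V = 2).le
    hxy hxz hyz with h | h | h
  · exact Or.inl ⟨angle_eq_pi_div_two_of_sub_add_sub_eq_zero hA hB h,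
      by linear_combination (norm := module) hsum - h⟩
  · refine Or.inr <| Or.inl ⟨?_, by linear_combination (norm := module) hsum - h⟩
    exact angle_eq_pi_div_two_of_sub_add_sub_eq_zero hB hA ((add_comm _ _).trans h)
  · refine Or.inr <| Or.inr ⟨?_, by linear_combination (norm := module) hsum - h⟩
    exact angle_eq_pi_div_two_of_sub_add_sub_eq_zero hC hB ((add_comm _ _).trans h)

theorem mem_circumNinePointTriangles_of_antipodal {O N B : V} {R : ℝ}
    (hR : 0 < R) (hd : dist O N = R / 2) (hB : dist O B = R)
    (hBT : B ≠ O + (2 : ℝ) • (N - O)) (hBT' : B ≠ O - (2 : ℝ) • (N - O)) :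
    {O + (2 : ℝ) • (N - O), B, O - (B - O)} ∈ circumNinePointTriangles O N R := by
  have hT : dist O (O + (2 : ℝ) • (N - O)) = R := by
    rw [dist_self_add_right, norm_two_smul_sub_eq_of_dist_eq_half hd]
  have hC : dist O (O - (B - O)) = R := by
    rw [dist_self_sub_right, ← dist_eq_norm, dist_comm, hB]
  have hind : AffineIndependent ℝ ![O + (2 : ℝ) • (N - O), B, O - (B - O)] := by
    refine Cospherical.affineIndependent_of_ne ⟨O, R, ?_⟩ hBT.symm ?_ ?_
    · rintro p (rfl | rfl | rfl) <;> rwa [dist_comm]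
    · intro h
      exact hBT' (by linear_combination (norm := module) h)
    · intro h
      have : B = O := by linear_combination (norm := module) (1 / 2 : ℝ) • h
      rw [this, dist_self] at hB
      exact hR.ne hB
  refine ⟨_, _, _, hind, rfl, hT, hB, hC, ?_⟩
  rw [midpoint_orthocenter_eq_iff hind hT hB hC]
  abel

theorem circumNinePointTriangles_infinite {O N : V} {R : ℝ} (hR : 0 < R)
    (hd : dist O N = R / 2) : (circumNinePointTriangles O N R).Infinite := by
  set T := O + (2 : ℝ) • (N - O)
  set T' := O - (2 : ℝ) • (N - O)
  have hT : T ∈ Metric.sphere O R := by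
    rw [Metric.mem_sphere, dist_comm, dist_self_add_right, norm_two_smul_sub_eq_of_dist_eq_half hd]
  have hT' : T' ∈ Metric.sphere O R := by
    rw [Metric.mem_sphere, dist_comm, dist_self_sub_right, norm_two_smul_sub_eq_of_dist_eq_half hd]
  have hTT' : T ≠ T' := fun h => by
    have : N - O = 0 := by linear_combination (norm := module) (1 / 4 : ℝ) • h
    rw [sub_eq_zero, ← dist_eq_zero, dist_comm, hd] at this
    linarith
  have hrank : 1 < Module.rank ℝ V := by
    rw [← finrank_eq_rank, (Fact.out : finrank ℝ V = 2)]
    norm_num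
  have hsphere : (Metric.sphere O R).Infinite :=
    (isConnected_sphere hrank O hR.le).isPreconnected.infinite_of_nontrivial ⟨T, hT, T', hT', hTT'⟩
  have hcover : Metric.sphere O R \ {T, T'} ⊆ ⋃₀ circumNinePointTriangles O N R := by
    rintro B ⟨hB, hBT⟩
    simp only [Set.mem_insert_iff, Set.mem_singleton_iff, not_or] at hBT
    rw [Metric.mem_sphere, dist_comm] at hB
    exact ⟨_, mem_circumNinePointTriangles_of_antipodal hR hd hB hBT.1 hBT.2, by simp⟩
  intro hfin
  refine (hsphere.sdiff (Set.toFinite _)) ((hfin.sUnion ?_).subset hcover)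
  rintro _ ⟨A, B, C, -, rfl, -⟩
  exact Set.toFinite _

end Plane

/-- If `dist O N = R/2`, there are infinitely many (unordered) triangles with circumcenter
`O`, circumradius `R` and nine-point center `N`; moreover every such triangle is
right-angled, with its right-angle vertex at the internal tangency point
`T = O + 2 • (N - O)` of the circumcircle and the Euler circle. -/
theorem infinite_triangles_sharing_circumcircle_euler_circle_right
    (O N : EuclideanSpace ℝ (Fin 2)) (R : ℝ) (hR : 0 < R) (hd : dist O N = R / 2) :
    {s : Set (EuclideanSpace ℝ (Fin 2)) |
        ∃ (A B C : EuclideanSpace ℝ (Fin 2)) (h : AffineIndependent ℝ ![A, B, C]),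
          s = {A, B, C} ∧ dist O A = R ∧ dist O B = R ∧ dist O C = R ∧
            midpoint ℝ O (Affine.Triangle.orthocenter ⟨![A, B, C], h⟩) = N}.Infinite ∧
      ∀ (A B C : EuclideanSpace ℝ (Fin 2)) (h : AffineIndependent ℝ ![A, B, C]),
        dist O A = R → dist O B = R → dist O C = R →
        midpoint ℝ O (Affine.Triangle.orthocenter ⟨![A, B, C], h⟩) = N →
        (∠ B A C = π / 2 ∧ A = O + (2 : ℝ) • (N - O)) ∨
          (∠ A B C = π / 2 ∧ B = O + (2 : ℝ) • (N - O)) ∨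
          (∠ B C A = π / 2 ∧ C = O + (2 : ℝ) • (N - O)) := by
  have : Fact (finrank ℝ (EuclideanSpace ℝ (Fin 2)) = 2) := ⟨finrank_euclideanSpace_fin⟩
  have hT := norm_two_smul_sub_eq_of_dist_eq_half hd
  exact ⟨circumNinePointTriangles_infinite hR hd,
    fun A B C h hA hB hC hN => right_angle_of_sub_add_sub_add_sub_eq hA hB hC hT
      ((midpoint_orthocenter_eq_iff h hA hB hC).1 hN)⟩
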